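/- arXiv:1304.4490 — 2 statements merged into one kernel-verified Lean document; each statement's English description precedes it below -/
import Mathlib

section
/- Let G be the solution on [1,2] of the ODE G'' + l(s) G' = 1 with boundary values G(1) = a, G(2) = 0, where l(s) = (n-1+4A)(1/R) coth(s/R). Then there exists a = a(n, Λ, A) > 0 such that G' < 0 on [1,2]. -/
/-!
Multiplying the equation by the integrating factor `μ = sinh (s / R) ^ (n - 1 + 4A)`, which
satisfies `μ' = l μ`, turns it into `(μ G')' = μ > 0`, so `μ G'` is increasing and it suffices
that `G' 2 < 0`. By the mean value theorem `G'` takes the value `-a` somewhere in `[1, 2]`, and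
from there `μ G'` grows by at most `max μ`; so `μ G'` is still negative at `2` as soon as
`a · min μ > max μ`.
-/

open Set Real

theorem hasDerivAt_integratingFactor_mul {μ v : ℝ → ℝ} {l w s : ℝ}
    (hμ : HasDerivAt μ (l * μ s) s) (hv : HasDerivAt v w s) (hode : w + l * v s = 1) :
    HasDerivAt (fun x => μ x * v x) (μ s) s :=
  (hμ.mul hv).congr_deriv (by linear_combination μ s * hode)

theorem forall_neg_of_hasDerivAt_mul_eq {μ v : ℝ → ℝ} {p q t a m M : ℝ}
    (hderiv : ∀ s ∈ Icc p q, HasDerivAt (fun x => μ x * v x) (μ s) s)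
    (hm : 0 < m) (hμm : ∀ s ∈ Icc p q, m ≤ μ s) (hμM : ∀ s ∈ Icc p q, μ s ≤ M)
    (ht : t ∈ Icc p q) (hvt : v t = -a) (ha : M * (q - p) < a * m) :
    ∀ s ∈ Icc p q, v s < 0 := by
  have hpq : p ≤ q := ht.1.trans ht.2
  have hq : q ∈ Icc p q := right_mem_Icc.2 hpq
  have hmono : MonotoneOn (fun x => μ x * v x) (Icc p q) := by
    refine monotoneOn_of_hasDerivWithinAt_nonneg (convex_Icc p q) (HasDerivAt.continuousOn hderiv)
      (fun x hx => (hderiv x (interior_subset hx)).hasDerivWithinAt)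
      (fun x hx => (hm.trans_le (hμm x (interior_subset hx))).le)
  have hgrowth : μ q * v q - μ t * v t ≤ M * (q - t) := by
    have := (convex_Icc p q).norm_image_sub_le_of_norm_hasDerivWithin_le
      (fun x hx => (hderiv x hx).hasDerivWithinAt)
      (fun x hx => by rw [Real.norm_eq_abs, abs_of_pos (hm.trans_le (hμm x hx))]; exact hμM x hx)
      ht hq
    rw [Real.norm_eq_abs, Real.norm_eq_abs, abs_of_nonneg (sub_nonneg.2 ht.2)] at this
    exact (le_abs_self _).trans this
  have hM : 0 ≤ M := (hm.le.trans (hμm t ht)).trans (hμM t ht)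
  have ha0 : 0 < a :=
    pos_of_mul_pos_left ((mul_nonneg hM (sub_nonneg.2 hpq)).trans_lt ha) hm.le
  have hq_neg : μ q * v q < 0 := calc
    μ q * v q ≤ M * (q - t) - a * μ t := by rw [hvt] at hgrowth; linarith
    _ ≤ M * (q - p) - a * m := by
      gcongr
      · exact ht.1
      · exact hμm t ht
    _ < 0 := by linarith
  intro s hs
  have hs_neg : μ s * v s < 0 := (hmono hs hq hs.2).trans_lt hq_neg
  exact neg_of_mul_neg_right hs_neg (hm.trans_le (hμm s hs)).le

theorem exists_pos_forall_deriv_neg_of_integratingFactor {p q : ℝ} (hpq : p < q)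
    {l μ : ℝ → ℝ} (hμ : ∀ s ∈ Icc p q, HasDerivAt μ (l s * μ s) s)
    (hμ0 : ∀ s ∈ Icc p q, 0 < μ s) :
    ∃ a : ℝ, 0 < a ∧
      ∀ G G' G'' : ℝ → ℝ,
        (∀ s ∈ Icc p q, HasDerivAt G (G' s) s) →
        (∀ s ∈ Icc p q, HasDerivAt G' (G'' s) s) →
        (∀ s ∈ Icc p q, G'' s + l s * G' s = 1) →
        G p = a → G q = 0 →
        ∀ s ∈ Icc p q, G' s < 0 := by
  have hcont : ContinuousOn μ (Icc p q) := HasDerivAt.continuousOn hμ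
  obtain ⟨m, hm, hμm⟩ := isCompact_Icc.exists_forall_le' hcont hμ0
  obtain ⟨M, hμM⟩ := isCompact_Icc.bddAbove_image hcont
  have hp : p ∈ Icc p q := left_mem_Icc.2 hpq.le
  have hM : 0 < M := (hμ0 p hp).trans_le (hμM ⟨p, hp, rfl⟩)
  set b := (M * (q - p) + 1) / m
  refine ⟨b * (q - p), by have := sub_pos.2 hpq; positivity, ?_⟩
  intro G G' G'' hG hG' hode hGp hGq
  obtain ⟨t, ht, hslope⟩ := exists_hasDerivAt_eq_slope G G' hpq
    (HasDerivAt.continuousOn hG) (fun x hx => hG x (Ioo_subset_Icc_self hx))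
  refine forall_neg_of_hasDerivAt_mul_eq (a := b)
    (fun s hs => hasDerivAt_integratingFactor_mul (hμ s hs) (hG' s hs) (hode s hs))
    hm hμm (fun s hs => hμM ⟨s, hs, rfl⟩) (Ioo_subset_Icc_self ht) ?_ ?_
  · rw [hslope, hGp, hGq]
    field_simp [(sub_pos.2 hpq).ne']
    ring
  · simp only [b, div_mul_cancel₀ _ hm.ne']
    linarith

theorem hasDerivAt_sinh_div_rpow {R c s : ℝ} (hs : 0 < sinh (s / R)) :
    HasDerivAt (fun x => sinh (x / R) ^ c)
      (c * (1 / R) * (cosh (s / R) / sinh (s / R)) * sinh (s / R) ^ c) s := by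
  have hsinh : HasDerivAt (fun x => sinh (x / R)) (cosh (s / R) * (1 / R)) s := by
    simpa [Function.comp_def] using
      (hasDerivAt_sinh (s / R)).comp s ((hasDerivAt_id s).div_const R)
  convert hsinh.rpow_const (p := c) (Or.inl hs.ne') using 1
  rw [rpow_sub hs, rpow_one]
  field_simp

theorem exists_boundary_value_decreasing_solution_general (n : ℕ)
    (A R : ℝ) (hR : 0 < R) :
    ∃ a : ℝ, 0 < a ∧
      ∀ G G' G'' : ℝ → ℝ,
        (∀ s ∈ Set.Icc (1 : ℝ) 2, HasDerivAt G (G' s) s) →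
        (∀ s ∈ Set.Icc (1 : ℝ) 2, HasDerivAt G' (G'' s) s) →
        (∀ s ∈ Set.Icc (1 : ℝ) 2,
          G'' s + (((n : ℝ) - 1 + 4 * A) * (1 / R) *
            (Real.cosh (s / R) / Real.sinh (s / R))) * G' s = 1) →
        G 1 = a → G 2 = 0 →
        ∀ s ∈ Set.Icc (1 : ℝ) 2, G' s < 0 := by
  have hsinh : ∀ s ∈ Icc (1 : ℝ) 2, 0 < sinh (s / R) :=
    fun s hs => sinh_pos_iff.2 (div_pos (one_pos.trans_le hs.1) hR)
  exact exists_pos_forall_deriv_neg_of_integratingFactor one_lt_two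
    (μ := fun s => sinh (s / R) ^ ((n : ℝ) - 1 + 4 * A))
    (fun s hs => hasDerivAt_sinh_div_rpow (hsinh s hs))
    (fun s hs => rpow_pos_of_pos (hsinh s hs) _)

/-- let `G` solve `G'' + l(s)G' = 1` on `[1,2]` with
`l(s) = (n-1+4A)(1/R) coth(s/R)`, `G(1) = a`, `G(2) = 0`. Then there exists
`a = a(n,Λ,A) > 0` (here also depending on `R`, which plays the role of `1/Λ`) such
that any such solution satisfies `G' < 0` on `[1,2]`. -/
theorem exists_boundary_value_decreasing_solution (n : ℕ) (hn : 2 ≤ n)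
    (A R : ℝ) (hA : 0 < A) (hR : 0 < R) :
    ∃ a : ℝ, 0 < a ∧
      ∀ G G' G'' : ℝ → ℝ,
        (∀ s ∈ Set.Icc (1 : ℝ) 2, HasDerivAt G (G' s) s) →
        (∀ s ∈ Set.Icc (1 : ℝ) 2, HasDerivAt G' (G'' s) s) →
        (∀ s ∈ Set.Icc (1 : ℝ) 2,
          G'' s + (((n : ℝ) - 1 + 4 * A) * (1 / R) *
            (Real.cosh (s / R) / Real.sinh (s / R))) * G' s = 1) →
        G 1 = a → G 2 = 0 →
        ∀ s ∈ Set.Icc (1 : ℝ) 2, G' s < 0 :=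
  exists_boundary_value_decreasing_solution_general n A R hR
end

section
/- Let l: (0,∞) → ℝ, l(s) = (n-1+4A)(1/R) coth(s/R), and for t > 0 let G_t: (0,t] → ℝ solve G'' + l G' = 1 with G' < 0, G(t) = 0, and G(s) → +∞ as s → 0⁺. Then G_t(s) is comparable to s^{2-n-4A} as s → 0⁺, i.e. G_t(s)·s^{n+4A-2} converges to a positive constant as s → 0⁺ (assuming n + 4A > 2). -/
/-!
The integrating factor `w(s) = sinh(s/R)^ν`, `ν = n - 1 + 4A > 1`, turns the equation into
`(w G')' = w`, so `w G'` has the limit `L = w(t) G'(t) - ∫₀ᵗ w < 0` at `0⁺`. As `sinh(s/R) ~ s/R`,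
`G'(s) s^ν → R^ν L`, and integrating this (an `∞/∞` l'Hôpital step against `s^(1-ν)`) gives
`G(s) s^(ν-1) → -R^ν L / (ν - 1) > 0`.
-/

open Real Filter Set Topology

theorem abs_sub_le_sub_of_abs_hasDerivAt_le {f f' B B' : ℝ → ℝ} {a b : ℝ} (hab : a ≤ b)
    (hf : ∀ x ∈ Icc a b, HasDerivAt f (f' x) x) (hB : ∀ x ∈ Icc a b, HasDerivAt B (B' x) x)
    (hle : ∀ x ∈ Ico a b, |f' x| ≤ B' x) : |f b - f a| ≤ B b - B a := by
  simpa using image_norm_le_of_norm_deriv_right_le_deriv_boundary'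
    (f := fun x => f x - f a) (B := fun x => B x - B a)
    (fun x hx => ((hf x hx).continuousAt.sub continuousAt_const).continuousWithinAt)
    (fun x hx => ((hf x (Ico_subset_Icc_self hx)).sub_const (f a)).hasDerivWithinAt)
    (by simp)
    (fun x hx => ((hB x hx).continuousAt.sub continuousAt_const).continuousWithinAt)
    (fun x hx => ((hB x (Ico_subset_Icc_self hx)).sub_const (B a)).hasDerivWithinAt)
    hle (right_mem_Icc.2 hab)

theorem tendsto_rpow_nhdsGT_zero {p : ℝ} (hp : 0 < p) :
    Tendsto (fun s : ℝ => s ^ p) (𝓝[>] 0) (𝓝 0) := by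
  simpa [zero_rpow hp.ne'] using
    (continuousAt_rpow_const 0 p (Or.inr hp.le)).tendsto.mono_left nhdsWithin_le_nhds

theorem tendsto_mul_rpow_sub_one_zero_of_hasDerivAt {f f' : ℝ → ℝ} {ν : ℝ} (hν : 1 < ν)
    (hf : ∀ᶠ s in 𝓝[>] 0, HasDerivAt f (f' s) s)
    (hf' : Tendsto (fun s => f' s * s ^ ν) (𝓝[>] 0) (𝓝 0)) :
    Tendsto (fun s => f s * s ^ (ν - 1)) (𝓝[>] 0) (𝓝 0) := by
  have hν' : 0 < ν - 1 := sub_pos.2 hν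
  rw [Metric.tendsto_nhds]
  intro ε hε
  obtain ⟨δ, hδ, hδf⟩ : ∃ δ > 0, ∀ u ∈ Ioc 0 δ,
      HasDerivAt f (f' u) u ∧ |f' u * u ^ ν| ≤ ε * (ν - 1) / 2 := by
    have hsmall := hf'.eventually
      (Metric.closedBall_mem_nhds 0 (by positivity : 0 < ε * (ν - 1) / 2))
    obtain ⟨δ, hδ, hsub⟩ := mem_nhdsGT_iff_exists_Ioc_subset.mp (hf.and hsmall)
    exact ⟨δ, hδ, fun u hu => by simpa [Metric.mem_closedBall] using hsub hu⟩
  have hdiff : ∀ s ∈ Ioc 0 δ, |f δ - f s| * s ^ (ν - 1) ≤ ε / 2 := by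
    intro s hs
    have hpos : ∀ u ∈ Icc s δ, 0 < u := fun u hu => hs.1.trans_le hu.1
    have hB : ∀ u ∈ Icc s δ, HasDerivAt (fun x => -(ε / 2) * x ^ (1 - ν))
        (ε * (ν - 1) / 2 * u ^ (-ν)) u := by
      intro u hu
      refine ((hasDerivAt_rpow_const (Or.inl (hpos u hu).ne')).const_mul _).congr_deriv ?_
      rw [show 1 - ν - 1 = -ν by ring]
      ring
    have hle := abs_sub_le_sub_of_abs_hasDerivAt_le hs.2
      (fun u hu => (hδf u ⟨hpos u hu, hu.2⟩).1) hB fun u hu => by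
        have hu0 := hpos u (Ico_subset_Icc_self hu)
        have := (hδf u ⟨hu0, hu.2.le⟩).2
        rw [abs_mul, abs_of_pos (rpow_pos_of_pos hu0 ν)] at this
        rw [rpow_neg hu0.le, ← div_eq_mul_inv, le_div_iff₀ (rpow_pos_of_pos hu0 ν)]
        exact this
    have hs1 : s ^ (1 - ν) * s ^ (ν - 1) = 1 := by
      rw [← rpow_add hs.1]; simp
    have hδpos : 0 ≤ δ ^ (1 - ν) * s ^ (ν - 1) :=
      mul_nonneg (rpow_nonneg hδ.le _) (rpow_nonneg hs.1.le _)
    calc |f δ - f s| * s ^ (ν - 1)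
        ≤ (-(ε / 2) * δ ^ (1 - ν) - -(ε / 2) * s ^ (1 - ν)) * s ^ (ν - 1) :=
          mul_le_mul_of_nonneg_right hle (rpow_nonneg hs.1.le _)
      _ = ε / 2 - ε / 2 * (δ ^ (1 - ν) * s ^ (ν - 1)) := by
          rw [sub_mul, mul_assoc, mul_assoc, hs1]; ring
      _ ≤ ε / 2 := by nlinarith
  have hfδ : ∀ᶠ s in 𝓝[>] 0, |f δ| * s ^ (ν - 1) < ε / 2 := by
    have := (tendsto_rpow_nhdsGT_zero hν').const_mul |f δ|
    rw [mul_zero] at this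
    exact this.eventually (eventually_lt_nhds (by positivity))
  filter_upwards [hfδ, Ioc_mem_nhdsGT hδ] with s hs hsδ
  have hsp : 0 < s ^ (ν - 1) := rpow_pos_of_pos hsδ.1 _
  rw [dist_zero_right, norm_mul, Real.norm_eq_abs, Real.norm_eq_abs, abs_of_pos hsp]
  calc |f s| * s ^ (ν - 1) ≤ (|f δ| + |f δ - f s|) * s ^ (ν - 1) := by
        gcongr
        calc |f s| = |f δ - (f δ - f s)| := by ring_nf
          _ ≤ |f δ| + |f δ - f s| := abs_sub _ _
    _ < ε := by linarith [hdiff s hsδ]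

theorem tendsto_mul_rpow_sub_one_of_hasDerivAt {f f' : ℝ → ℝ} {ν L : ℝ} (hν : 1 < ν)
    (hf : ∀ᶠ s in 𝓝[>] 0, HasDerivAt f (f' s) s)
    (hf' : Tendsto (fun s => f' s * s ^ ν) (𝓝[>] 0) (𝓝 L)) :
    Tendsto (fun s => f s * s ^ (ν - 1)) (𝓝[>] 0) (𝓝 (-L / (ν - 1))) := by
  have hν' : ν - 1 ≠ 0 := (sub_pos.2 hν).ne'
  -- subtracting the model solution `-L / (ν - 1) · s ^ (1 - ν)` reduces to the case `L = 0`
  set φ : ℝ → ℝ := fun s => f s + L / (ν - 1) * s ^ (1 - ν)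
  have hφ : ∀ᶠ s in 𝓝[>] 0, HasDerivAt φ (f' s - L * s ^ (-ν)) s := by
    filter_upwards [hf, self_mem_nhdsWithin] with s hs hs0
    refine (hs.add ((hasDerivAt_rpow_const (p := 1 - ν) (Or.inl (ne_of_gt hs0))).const_mul
      (L / (ν - 1)))).congr_deriv ?_
    field_simp
    ring_nf
  have hφ' : Tendsto (fun s => (f' s - L * s ^ (-ν)) * s ^ ν) (𝓝[>] 0) (𝓝 0) := by
    refine (sub_self L ▸ hf'.sub_const L).congr' ?_
    filter_upwards [self_mem_nhdsWithin] with s (hs : 0 < s)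
    rw [sub_mul, mul_assoc, ← rpow_add hs]
    simp
  have := (tendsto_mul_rpow_sub_one_zero_of_hasDerivAt hν hφ hφ').sub_const (L / (ν - 1))
  rw [zero_sub, ← neg_div] at this
  refine this.congr' ?_
  filter_upwards [self_mem_nhdsWithin] with s (hs : 0 < s)
  simp only [φ, add_mul, mul_assoc, ← rpow_add hs]
  simp

theorem tendsto_nhdsGT_sub_integral_of_hasDerivAt {H h : ℝ → ℝ} {a b : ℝ} (hab : a < b)
    (hH : ∀ s ∈ Ioc a b, HasDerivAt H (h s) s) (hh : Continuous h) :
    Tendsto H (𝓝[>] a) (𝓝 (H b - ∫ s in a..b, h s)) := by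
  have hcont : ContinuousAt (fun u => H b - ∫ s in u..b, h s) a :=
    (intervalIntegral.integral_hasDerivAt_left (hh.intervalIntegrable a b)
      (hh.stronglyMeasurableAtFilter _ _) hh.continuousAt).continuousAt.const_sub _
  refine (hcont.tendsto.mono_left nhdsWithin_le_nhds).congr' ?_
  filter_upwards [Ioc_mem_nhdsGT hab] with s hs
  have hsub : uIcc s b ⊆ Ioc a b := by
    rw [uIcc_of_le hs.2]
    exact fun u hu => ⟨hs.1.trans_le hu.1, hu.2⟩
  rw [intervalIntegral.integral_eq_sub_of_hasDerivAt (fun u hu => hH u (hsub hu))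
    (hh.intervalIntegrable s b)]
  ring

theorem tendsto_div_sinh_div {R : ℝ} (hR : R ≠ 0) :
    Tendsto (fun s => s / sinh (s / R)) (𝓝[≠] 0) (𝓝 R) := by
  have hslope : Tendsto (fun x => sinh x / x) (𝓝[≠] 0) (𝓝 1) := by
    refine (cosh_zero ▸ hasDerivAt_iff_tendsto_slope.mp (hasDerivAt_sinh 0)).congr fun x => ?_
    simp [slope_def_field]
  have hdiv : Tendsto (fun s : ℝ => s / R) (𝓝[≠] 0) (𝓝[≠] 0) := by
    refine tendsto_nhdsWithin_of_tendsto_nhds_of_eventually_within _ ?_ ?_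
    · simpa using ((continuous_id.div_const R).tendsto 0).mono_left nhdsWithin_le_nhds
    · filter_upwards [self_mem_nhdsWithin] with s hs
      exact div_ne_zero hs hR
  have := ((hslope.comp hdiv).inv₀ one_ne_zero).const_mul R
  simp only [inv_one, mul_one] at this
  refine this.congr' ?_
  filter_upwards [self_mem_nhdsWithin] with s hs
  simp only [Function.comp, inv_div]
  field_simp

theorem hasDerivAt_sinh_rpow_mul {g g' : ℝ → ℝ} {ν R s : ℝ} (hsR : s / R ≠ 0)
    (hg : HasDerivAt g (g' s) s)
    (hode : g' s + ν * (1 / R) * (cosh (s / R) / sinh (s / R)) * g s = 1) :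
    HasDerivAt (fun x => sinh (x / R) ^ ν * g x) (sinh (s / R) ^ ν) s := by
  have hsinh : sinh (s / R) ≠ 0 := sinh_ne_zero.2 hsR
  have hw : HasDerivAt (fun x => sinh (x / R)) (cosh (s / R) * (1 / R)) s := by
    simpa using ((hasDerivAt_id s).div_const R).sinh
  refine ((hw.rpow_const (p := ν) (Or.inl hsinh)).mul hg).congr_deriv ?_
  rw [rpow_sub_one hsinh, show g' s = 1 - ν * (1 / R) * (cosh (s / R) / sinh (s / R)) * g s by
    linarith]
  field_simp
  ring

theorem green_type_solution_asymptotics_general (n : ℕ)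
    (A R t : ℝ) (hR : 0 < R) (ht : 0 < t)
    (hdeg : (2 : ℝ) < (n : ℝ) + 4 * A)
    (G G' G'' : ℝ → ℝ)
    (hG : ∀ s ∈ Set.Ioc (0 : ℝ) t, HasDerivAt G (G' s) s)
    (hG' : ∀ s ∈ Set.Ioc (0 : ℝ) t, HasDerivAt G' (G'' s) s)
    (hode : ∀ s ∈ Set.Ioc (0 : ℝ) t,
      G'' s + (((n : ℝ) - 1 + 4 * A) * (1 / R) *
        (Real.cosh (s / R) / Real.sinh (s / R))) * G' s = 1)
    (hdec : ∀ s ∈ Set.Ioc (0 : ℝ) t, G' s < 0) :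
    ∃ c : ℝ, 0 < c ∧
      Tendsto (fun s : ℝ => G s * s ^ ((n : ℝ) + 4 * A - 2))
        (nhdsWithin 0 (Set.Ioi 0)) (nhds c) := by
  set ν : ℝ := (n : ℝ) - 1 + 4 * A
  have hν : 1 < ν := by linarith
  set w : ℝ → ℝ := fun s => sinh (s / R) ^ ν
  have hw : Continuous w :=
    (continuous_sinh.comp (continuous_id.div_const R)).rpow_const fun _ => Or.inr (by linarith)
  set L := w t * G' t - ∫ s in (0)..t, w s
  have hwG' : Tendsto (fun s => w s * G' s) (𝓝[>] 0) (𝓝 L) :=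
    tendsto_nhdsGT_sub_integral_of_hasDerivAt ht (fun s hs =>
      hasDerivAt_sinh_rpow_mul (div_pos hs.1 hR).ne' (hG' s hs) (hode s hs)) hw
  have hL : L < 0 := by
    have hwt : 0 < w t := rpow_pos_of_pos (sinh_pos_iff.2 (div_pos ht hR)) ν
    have hint : 0 ≤ ∫ s in (0)..t, w s := intervalIntegral.integral_nonneg ht.le fun s hs =>
      rpow_nonneg (sinh_nonneg_iff.2 (div_nonneg hs.1 hR.le)) ν
    nlinarith [hdec t ⟨ht, le_rfl⟩]
  have hG'lim : Tendsto (fun s => G' s * s ^ ν) (𝓝[>] 0) (𝓝 (R ^ ν * L)) := by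
    refine ((((tendsto_div_sinh_div hR.ne').mono_left (nhdsGT_le_nhdsNE 0)).rpow_const
      (Or.inl hR.ne')).mul hwG').congr' ?_
    filter_upwards [self_mem_nhdsWithin] with s (hs : 0 < s)
    have hsinh : 0 < sinh (s / R) := sinh_pos_iff.2 (div_pos hs hR)
    rw [div_rpow hs.le hsinh.le]
    simp only [w]
    field_simp [(rpow_pos_of_pos hsinh ν).ne']
  refine ⟨-(R ^ ν * L) / (ν - 1), div_pos (by nlinarith [rpow_pos_of_pos hR ν]) (by linarith), ?_⟩
  have hexp : (n : ℝ) + 4 * A - 2 = ν - 1 := by ring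
  rw [hexp]
  exact tendsto_mul_rpow_sub_one_of_hasDerivAt hν
    (eventually_of_mem (Ioc_mem_nhdsGT ht) hG) hG'lim

/-- let `G_t` be the decreasing solution of `G'' + l(s)G' = 1` on `(0,t]`
with `l(s) = (n-1+4A)(1/R) coth(s/R)`, `G_t(t) = 0`, blowing up at `0`. Then
`G_t(s)` is comparable to `s^{2-n-4A}` as `s → 0⁺`: `G_t(s)·s^{n+4A-2}` converges to a
positive constant as `s → 0⁺` (assuming `n + 4A > 2`). -/
theorem green_type_solution_asymptotics (n : ℕ) (hn : 2 ≤ n)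
    (A R t : ℝ) (hA : 0 < A) (hR : 0 < R) (ht : 0 < t)
    (hdeg : (2 : ℝ) < (n : ℝ) + 4 * A)
    (G G' G'' : ℝ → ℝ)
    (hG : ∀ s ∈ Set.Ioc (0 : ℝ) t, HasDerivAt G (G' s) s)
    (hG' : ∀ s ∈ Set.Ioc (0 : ℝ) t, HasDerivAt G' (G'' s) s)
    (hode : ∀ s ∈ Set.Ioc (0 : ℝ) t,
      G'' s + (((n : ℝ) - 1 + 4 * A) * (1 / R) *
        (Real.cosh (s / R) / Real.sinh (s / R))) * G' s = 1)
    (hdec : ∀ s ∈ Set.Ioc (0 : ℝ) t, G' s < 0)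
    (hGt : G t = 0)
    (hblow : Tendsto G (nhdsWithin 0 (Set.Ioi 0)) atTop) :
    ∃ c : ℝ, 0 < c ∧
      Tendsto (fun s : ℝ => G s * s ^ ((n : ℝ) + 4 * A - 2))
        (nhdsWithin 0 (Set.Ioi 0)) (nhds c) :=
  green_type_solution_asymptotics_general n A R t hR ht hdeg G G' G'' hG hG' hode hdec
end
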